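/- arXiv:2307.06914 — 10 statements merged into one kernel-verified Lean document; each statement's English description precedes it below -/
import Mathlib

section
/- Let S be the set of the first r positive integers whose base-9 expansion uses only the digits 0, 1, 2. If a, b, c, d ∈ S satisfy a + 3c = d + 3b (equivalently a - 3b + 3c - d = 0), then a = d and b = c. -/
/-- `n` is a positive integer all of whose base-9 digits lie in {0,1,2}. -/
def Base9Digits012 (n : ℕ) : Prop :=
  0 < n ∧ ∀ d ∈ Nat.digits 9 n, d ≤ 2

private def P9 (n : ℕ) : Prop := ∀ d ∈ Nat.digits 9 n, d ≤ 2

private lemma P9_mod (n : ℕ) (h : P9 n) : n % 9 ≤ 2 := by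
  rcases Nat.eq_zero_or_pos n with h0 | h0
  · simp [h0]
  · exact h (n % 9) (by rw [Nat.digits_def' (by norm_num) h0]; exact List.mem_cons_self)

private lemma P9_div (n : ℕ) (h : P9 n) : P9 (n / 9) := by
  intro d hd
  rcases Nat.eq_zero_or_pos n with h0 | h0
  · simp [h0, Nat.digits] at hd
  · exact h d (by rw [Nat.digits_def' (by norm_num) h0]; exact List.mem_cons_of_mem _ hd)

private lemma key9 (n : ℕ) : ∀ a b c d : ℕ, a + b + c + d = n → P9 a → P9 b → P9 c → P9 d →
    a + 3 * c = d + 3 * b → a = d ∧ b = c := by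
  induction n using Nat.strong_induction_on with
  | _ n ih =>
    intro a b c d hn pa pb pc pd heq
    rcases Nat.eq_zero_or_pos n with h0 | h0
    · omega
    · have ha2 := P9_mod a pa
      have hb2 := P9_mod b pb
      have hc2 := P9_mod c pc
      have hd2 := P9_mod d pd
      have h1 : a % 9 = d % 9 ∧ c % 9 = b % 9 ∧
          a / 9 + 3 * (c / 9) = d / 9 + 3 * (b / 9) := by omega
      have hlt : a / 9 + b / 9 + c / 9 + d / 9 < n := by omega
      have := ih _ hlt (a / 9) (b / 9) (c / 9) (d / 9) rfl
        (P9_div a pa) (P9_div b pb) (P9_div c pc) (P9_div d pd) h1.2.2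
      omega

theorem stmt_0 (r : ℕ) (S : Finset ℕ)
    (hcard : S.card = r)
    (hmem : ∀ n ∈ S, Base9Digits012 n)
    (hfirst : ∀ m ∈ S, ∀ n : ℕ, Base9Digits012 n → n < m → n ∈ S)
    (a b c d : ℕ) (ha : a ∈ S) (hb : b ∈ S) (hc : c ∈ S) (hd : d ∈ S)
    (heq : a + 3 * c = d + 3 * b) :
    a = d ∧ b = c :=
  key9 (a + b + c + d) a b c d rfl (hmem a ha).2 (hmem b hb).2 (hmem c hc).2 (hmem d hd).2 heq
end

section
/- Let a₁ < a₂ < ⋯ < aₙ be distinct integers and set cᵢ = ∏_{j ≠ i} (aᵢ - aⱼ). Then the polynomial identity ∑_{i=1}^n (x + aᵢ y)^{n-2} / cᵢ = 0 holds in ℝ[x, y]. -/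
open Finset MvPolynomial

open Polynomial in
lemma key_sum {n : ℕ} (b : Fin n → ℝ) (hb : Function.Injective b) (k : ℕ) (hk : k + 1 < n) :
    ∑ i, b i ^ k * (∏ j ∈ univ.erase i, (b i - b j))⁻¹ = 0 := by
  have hinj : Set.InjOn b (univ : Finset (Fin n)) := hb.injOn
  have hdeg : (Polynomial.X ^ k : ℝ[X]).degree < (univ : Finset (Fin n)).card := by
    rw [Polynomial.degree_X_pow, Finset.card_univ, Fintype.card_fin]
    exact_mod_cast Nat.lt_of_succ_lt hk
  have h := Lagrange.eq_interpolate (v := b) hinj hdeg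
  have hcoeffb : ∀ i : Fin n, (Lagrange.basis univ b i).coeff (n - 1)
      = (∏ j ∈ univ.erase i, (b i - b j))⁻¹ := by
    intro i
    have hnd : (Lagrange.basis univ b i).natDegree = n - 1 := by
      rw [Lagrange.natDegree_basis hinj (mem_univ i), Finset.card_univ, Fintype.card_fin]
    rw [← hnd, Polynomial.coeff_natDegree, Lagrange.basis, Polynomial.leadingCoeff_prod,
      ← Finset.prod_inv_distrib]
    refine Finset.prod_congr rfl fun j hj => ?_
    have hne : b i ≠ b j := fun hEq => (mem_erase.mp hj).1 (hb hEq).symm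
    rw [Lagrange.basisDivisor, Polynomial.leadingCoeff_mul, Polynomial.leadingCoeff_C,
      (Polynomial.monic_X_sub_C (b j)).leadingCoeff, mul_one]
  have h2 := congrArg (fun p => Polynomial.coeff p (n - 1)) h
  simp only [Lagrange.interpolate_apply, Polynomial.finset_sum_coeff,
    Polynomial.coeff_C_mul, Polynomial.coeff_X_pow, hcoeffb, Polynomial.eval_pow,
    Polynomial.eval_X] at h2
  rw [if_neg (by omega : ¬ n - 1 = k)] at h2
  exact h2.symm

theorem stmt_3 (n : ℕ) (hn : 2 ≤ n) (a : Fin n → ℤ) (ha : StrictMono a)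
    (c : Fin n → ℤ) (hc : ∀ i, c i = ∏ j ∈ univ.erase i, (a i - a j)) :
    ∑ i : Fin n,
      MvPolynomial.C ((c i : ℝ)⁻¹) *
        (MvPolynomial.X 0 + MvPolynomial.C (a i : ℝ) * MvPolynomial.X 1) ^ (n - 2)
      = (0 : MvPolynomial (Fin 2) ℝ) := by
  set b : Fin n → ℝ := fun i => (a i : ℝ) with hb
  have hbinj : Function.Injective b := by
    intro i j h
    exact ha.injective (Int.cast_injective h)
  have hcb : ∀ i, (c i : ℝ) = ∏ j ∈ univ.erase i, (b i - b j) := by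
    intro i; rw [hc i]; push_cast; rfl
  calc ∑ i : Fin n, MvPolynomial.C ((c i : ℝ)⁻¹) *
        (MvPolynomial.X 0 + MvPolynomial.C (b i) * MvPolynomial.X 1) ^ (n - 2)
      = ∑ k ∈ Finset.range (n - 2 + 1),
          MvPolynomial.C (∑ i : Fin n, b i ^ (n - 2 - k) * (c i : ℝ)⁻¹) *
            (MvPolynomial.X 0 ^ k * MvPolynomial.X 1 ^ (n - 2 - k) * ((n-2).choose k : MvPolynomial (Fin 2) ℝ)) := by
        have step : ∀ i : Fin n, MvPolynomial.C ((c i : ℝ)⁻¹) *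
            (MvPolynomial.X 0 + MvPolynomial.C (b i) * MvPolynomial.X 1) ^ (n - 2)
            = ∑ k ∈ Finset.range (n - 2 + 1),
              MvPolynomial.C (b i ^ (n - 2 - k) * (c i : ℝ)⁻¹) *
                (MvPolynomial.X 0 ^ k * MvPolynomial.X 1 ^ (n - 2 - k) * ((n-2).choose k : MvPolynomial (Fin 2) ℝ)) := by
          intro i
          rw [add_pow, Finset.mul_sum]
          refine Finset.sum_congr rfl fun k _ => ?_
          rw [mul_pow, ← MvPolynomial.C_pow, MvPolynomial.C_mul]
          ring
        simp_rw [step]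
        rw [Finset.sum_comm]
        refine Finset.sum_congr rfl fun k _ => ?_
        rw [map_sum, Finset.sum_mul]
    _ = 0 := by
        refine Finset.sum_eq_zero fun k hk => ?_
        have : ∑ i : Fin n, b i ^ (n - 2 - k) * (c i : ℝ)⁻¹ = 0 := by
          have := key_sum b hbinj (n - 2 - k) (by omega)
          simpa [hcb] using this
        rw [this, map_zero, zero_mul]
end

section
/- Let k ≥ 4 be even and suppose φ : ℤ/Nℤ → [r] is a coloring with no symmetrically colored non-trivial k-AP. Then for every positive integer ℓ, the coloring ψ : ℤ/Nˡℤ → [r]ˡ given by applying φ to each base-N digit has no symmetrically colored non-trivial k-AP. -/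
/-- A coloring `φ` of an abelian group has no symmetrically colored non-trivial `k`-AP:
every `k`-AP `n, n+d, …, n+(k-1)d` with `d ≠ 0` has some `i < k/2` with
`φ(n+id) ≠ φ(n+(k-1-i)d)`. -/
def NoSymColoredAP {G α : Type*} [AddCommGroup G] (k : ℕ) (φ : G → α) : Prop :=
  ∀ n d : G, d ≠ 0 → ∃ i : ℕ, i < k / 2 ∧ φ (n + i • d) ≠ φ (n + (k - 1 - i) • d)

private lemma digit_key (N j L : ℕ) (hj : j < L) (hN : 0 < N) (m w : ℕ) (hw : N ^ j ∣ w) :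
    (((m + w) % N ^ L) / N ^ j) % N = (m / N ^ j + w / N ^ j) % N := by
  obtain ⟨c, rfl⟩ := hw
  have hNj : 0 < N ^ j := pow_pos hN j
  have hM : 0 < N ^ (L - j) := pow_pos hN _
  have hL : N ^ L = N ^ j * N ^ (L - j) := by rw [← pow_add]; congr 1; omega
  have hdivc : N ^ j * c / N ^ j = c := Nat.mul_div_cancel_left c hNj
  set q := m / N ^ j with hq
  set s := m % N ^ j with hs
  have hslt : s < N ^ j := Nat.mod_lt _ hNj
  have hsm : m = N ^ j * q + s := (Nat.div_add_mod m (N ^ j)).symm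
  set M := N ^ (L - j) with hMdef
  have hrw : m + N ^ j * c = N ^ j * ((q + c) % M) + s + N ^ j * M * ((q + c) / M) := by
    have h := Nat.div_add_mod (q + c) M
    calc m + N ^ j * c = N ^ j * (q + c) + s := by rw [hsm]; ring
      _ = N ^ j * (M * ((q + c) / M) + (q + c) % M) + s := by rw [h]
      _ = N ^ j * ((q + c) % M) + s + N ^ j * M * ((q + c) / M) := by ring
  have hmod : (m + N ^ j * c) % N ^ L = N ^ j * ((q + c) % M) + s := by
    rw [hrw, hL, Nat.add_mul_mod_self_left]
    apply Nat.mod_eq_of_lt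
    have h1 : (q + c) % M < M := Nat.mod_lt _ hM
    calc N ^ j * ((q + c) % M) + s < N ^ j * ((q + c) % M) + N ^ j := by omega
      _ = N ^ j * ((q + c) % M + 1) := by ring
      _ ≤ N ^ j * M := Nat.mul_le_mul_left _ (by omega)
  rw [hmod, Nat.mul_add_div hNj, Nat.div_eq_of_lt hslt, Nat.add_zero,
    Nat.mod_mod_of_dvd _ (dvd_pow_self N (by omega : L - j ≠ 0)), hdivc]

theorem stmt_6 (k : ℕ) (hk : 4 ≤ k) (hke : Even k)
    (N r ℓ : ℕ) (hN : 0 < N) (hℓ : 0 < ℓ)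
    (φ : ZMod N → Fin r) (hφ : NoSymColoredAP k φ)
    (ψ : ZMod (N ^ ℓ) → (Fin ℓ → Fin r))
    (hψ : ∀ (x : ZMod (N ^ ℓ)) (j : Fin ℓ),
      ψ x j = φ (((x.val / N ^ (j : ℕ)) % N : ℕ) : ZMod N)) :
    NoSymColoredAP k ψ := by
  intro n d hd
  haveI : NeZero (N ^ ℓ) := ⟨by positivity⟩
  -- N ≥ 2, else contradiction
  rcases eq_or_lt_of_le (show 1 ≤ N from hN) with hN1 | hN2
  · exfalso; apply hd
    haveI : Subsingleton (ZMod (N ^ ℓ)) := by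
      rw [show N ^ ℓ = 1 by rw [← hN1]; simp]; infer_instance
    exact Subsingleton.elim d 0
  haveI : NeZero N := ⟨by omega⟩
  set v := d.val with hv
  have hv0 : v ≠ 0 := fun h => hd (by rwa [← ZMod.val_eq_zero])
  have hvlt : v < N ^ ℓ := ZMod.val_lt d
  have hex : ∃ t, ¬ N ^ t ∣ v := ⟨ℓ, fun h => hv0 (Nat.eq_zero_of_dvd_of_lt h hvlt)⟩
  set j0 := Nat.find hex with hj0
  have hspec : ¬ N ^ j0 ∣ v := Nat.find_spec hex
  have hj0pos : j0 ≠ 0 := by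
    intro h; rw [h] at hspec; exact hspec (by simp)
  set j := j0 - 1 with hjdef
  have hjd : N ^ j ∣ v := by
    by_contra h
    have := Nat.find_min' hex h
    omega
  have hnd : ¬ N ^ (j + 1) ∣ v := by
    rw [show j + 1 = j0 by omega]; exact hspec
  have hjl : j < ℓ := by
    have : j0 ≤ ℓ := Nat.find_le (fun h => hv0 (Nat.eq_zero_of_dvd_of_lt h hvlt))
    omega
  have hNj : 0 < N ^ j := pow_pos hN j
  set a := v / N ^ j with ha
  have hva : v = N ^ j * a := (Nat.mul_div_cancel' hjd).symm
  have hNa : ¬ N ∣ a := by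
    rintro ⟨b, hb⟩; exact hnd ⟨b, by rw [hva, hb]; ring⟩
  have hd0 : ((a : ℕ) : ZMod N) ≠ 0 := by
    rw [Ne, ZMod.natCast_eq_zero_iff]; exact hNa
  have key : ∀ m : ℕ,
      ψ (n + m • d) ⟨j, hjl⟩ = φ (((n.val / N ^ j : ℕ) : ZMod N) + m • ((a : ℕ) : ZMod N)) := by
    intro m
    rw [hψ]
    congr 1
    have h1 : n + m • d = ((n.val + m * v : ℕ) : ZMod (N ^ ℓ)) := by
      have hdv : ((d.val : ℕ) : ZMod (N ^ ℓ)) = d := (ZMod.natCast_val d).trans (ZMod.cast_id _ _)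
      push_cast
      have hnv : ((n.val : ℕ) : ZMod (N ^ ℓ)) = n := (ZMod.natCast_val n).trans (ZMod.cast_id _ _)
      rw [nsmul_eq_mul, hv, hdv, hnv]
    have h2 : (m * v) / N ^ j = m * a := by
      rw [hva, show m * (N ^ j * a) = N ^ j * (m * a) by ring, Nat.mul_div_cancel_left _ hNj]
    rw [h1, ZMod.val_natCast,
      digit_key N j ℓ hjl hN n.val (m * v) ⟨m * a, by rw [hva]; ring⟩, h2,
      ZMod.natCast_mod]
    push_cast
    rw [nsmul_eq_mul]
  obtain ⟨i, hi, hne⟩ := hφ (((n.val / N ^ j : ℕ)) : ZMod N) ((a : ℕ) : ZMod N) hd0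
  exact ⟨i, hi, fun h => hne (by rw [← key i, ← key (k - 1 - i), h])⟩
end

section
/- Let a, k, p be positive integers with k ≤ a and gcd(p, a!) = 1, and let n₁, …, n_k be integers forming a k-AP with jumps of size p (that is, there exists d with n_{i+1} - nᵢ ∈ {d, d+p} for all 1 ≤ i < k). If n₁ ≡ n_k (mod a!), then n₁, …, n_k is a genuine arithmetic progression. -/
theorem stmt_7 (a k p : ℕ) (ha : 0 < a) (hk : 0 < k) (hp : 0 < p)
    (hka : k ≤ a) (hgcd : Nat.gcd p (Nat.factorial a) = 1)
    (n : ℕ → ℤ) (d : ℤ)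
    (hjump : ∀ i : ℕ, i < k - 1 → n (i + 1) - n i = d ∨ n (i + 1) - n i = d + p)
    (hcong : (Nat.factorial a : ℤ) ∣ n (k - 1) - n 0) :
    ∃ e : ℤ, ∀ i : ℕ, i < k - 1 → n (i + 1) - n i = e := by
  rcases Nat.eq_or_lt_of_le hk with h1 | h2
  · exact ⟨d, fun i hi => absurd hi (by omega)⟩
  set m := k - 1 with hm
  have hm0 : 0 < m := by omega
  have hma : m ≤ a := by omega
  -- telescoping sum
  have htel : ∑ i ∈ Finset.range m, (n (i + 1) - n i) = n m - n 0 :=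
    Finset.sum_range_sub n m
  set S := (Finset.range m).filter (fun i => n (i + 1) - n i = d + p) with hS
  have hSsub : S ⊆ Finset.range m := Finset.filter_subset _ _
  set T := (Finset.range m).filter (fun i => ¬ n (i + 1) - n i = d + p) with hT
  have hsum : ∑ i ∈ Finset.range m, (n (i + 1) - n i) = m * d + S.card * p := by
    rw [← Finset.sum_filter_add_sum_filter_not (Finset.range m)
      (fun i => n (i + 1) - n i = d + p), ← hS, ← hT]
    have h1 : ∑ i ∈ S, (n (i + 1) - n i) = (S.card : ℤ) * (d + p) := by
      rw [Finset.sum_congr rfl (fun i hi => (Finset.mem_filter.mp hi).2),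
        Finset.sum_const, nsmul_eq_mul]
    have h2 : ∑ i ∈ T, (n (i + 1) - n i) = (T.card : ℤ) * d := by
      rw [Finset.sum_congr rfl (g := fun _ => d) (fun i hi => ?_),
        Finset.sum_const, nsmul_eq_mul]
      have hmem := Finset.mem_filter.mp hi
      rcases hjump i (Finset.mem_range.mp hmem.1) with h | h
      · exact h
      · exact absurd h hmem.2
    rw [h1, h2]
    have hcard : S.card + T.card = m := by
      rw [hS, hT, Finset.card_filter_add_card_filter_not, Finset.card_range]
    have hTc : (T.card : ℤ) = (m : ℤ) - S.card := by
      have := hcard; push_cast [← this]; ring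
    rw [hTc]; ring
  have hdvdfac : (m : ℤ) ∣ (Nat.factorial a : ℤ) :=
    Int.natCast_dvd_natCast.mpr (Nat.dvd_factorial hm0 hma)
  have hdvd : (m : ℤ) ∣ (S.card : ℤ) * p := by
    have h1 : (m : ℤ) ∣ (m : ℤ) * d + S.card * p := by
      rw [← hsum, htel]
      exact hdvdfac.trans hcong
    have := h1.sub (Dvd.intro d rfl)
    simpa using this
  have hcop : Nat.Coprime m p := by
    have : Nat.Coprime p m :=
      Nat.Coprime.coprime_dvd_right (Nat.dvd_factorial hm0 hma) hgcd
    exact this.symm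
  have hdvdN : m ∣ S.card * p := by
    exact_mod_cast hdvd
  have hdvdcard : m ∣ S.card := (Nat.Coprime.dvd_of_dvd_mul_right hcop) hdvdN
  have hcardle : S.card ≤ m := by
    simpa [Finset.card_range] using Finset.card_le_card hSsub
  rcases Nat.eq_zero_or_pos S.card with hc0 | hcpos
  · refine ⟨d, fun i hi => ?_⟩
    rcases hjump i hi with h | h
    · exact h
    · exfalso
      have : i ∈ S := Finset.mem_filter.mpr ⟨Finset.mem_range.mpr hi, h⟩
      simp [Finset.card_eq_zero.mp hc0] at this
  · have hcm : S.card = m := Nat.le_antisymm hcardle (Nat.le_of_dvd hcpos hdvdcard)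
    have hSeq : S = Finset.range m :=
      Finset.eq_of_subset_of_card_le hSsub (by simp [hcm])
    refine ⟨d + p, fun i hi => ?_⟩
    have : i ∈ S := hSeq ▸ Finset.mem_range.mpr hi
    exact (Finset.mem_filter.mp this).2
end

section
/- Let a, k, p be positive integers with k ≤ a and gcd(p, a!) = 1, and let n₁, …, n_k be integers forming a k-AP with jumps of size p. Suppose there exist indices 1 < k' < k'' < k with n₁ ≡ n_{k''} (mod a!) and n_{k'} ≡ n_k (mod a!). Then n₁, …, n_k is a genuine arithmetic progression. -/
lemma aux_zero_one (m : ℕ) (t : ℕ → ℤ) (ht : ∀ i, t i = 0 ∨ t i = 1)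
    (hd : (m : ℤ) ∣ ∑ i ∈ Finset.range m, t i) :
    (∀ i < m, t i = 0) ∨ (∀ i < m, t i = 1) := by
  set S := ∑ i ∈ Finset.range m, t i with hS
  have hnn : ∀ i ∈ Finset.range m, 0 ≤ t i := fun i _ => by
    rcases ht i with h | h <;> simp [h]
  have h0 : 0 ≤ S := Finset.sum_nonneg hnn
  have hle : S ≤ m := by
    calc S ≤ ∑ _i ∈ Finset.range m, (1 : ℤ) :=
          Finset.sum_le_sum (fun i _ => by rcases ht i with h | h <;> simp [h])
      _ = m := by simp
  rcases eq_or_lt_of_le h0 with h | h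
  · left
    intro i hi
    exact (Finset.sum_eq_zero_iff_of_nonneg hnn).mp h.symm i (Finset.mem_range.mpr hi)
  · right
    have hmS : (m : ℤ) ≤ S := Int.le_of_dvd h hd
    have hSm : S = m := le_antisymm hle hmS
    have hz : ∑ i ∈ Finset.range m, (1 - t i) = 0 := by
      rw [Finset.sum_sub_distrib, ← hS, hSm]
      simp
    have hnn' : ∀ i ∈ Finset.range m, 0 ≤ 1 - t i := fun i _ => by
      rcases ht i with h | h <;> simp [h]
    intro i hi
    have := (Finset.sum_eq_zero_iff_of_nonneg hnn').mp hz i (Finset.mem_range.mpr hi)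
    linarith

lemma aux_block (a p : ℕ) (hgcd : Nat.gcd p (Nat.factorial a) = 1)
    (n : ℕ → ℤ) (d : ℤ) (u : ℕ → ℤ)
    (hu01 : ∀ i, u i = 0 ∨ u i = 1)
    (s m : ℕ) (hm : 0 < m) (hma : m ≤ a)
    (hup : ∀ i, s ≤ i → i < s + m → n (i + 1) - n i = d + p * u i)
    (hcong : (Nat.factorial a : ℤ) ∣ n (s + m) - n s) :
    (∀ i < m, u (s + i) = 0) ∨ (∀ i < m, u (s + i) = 1) := by
  have tele : ∑ i ∈ Finset.range m, (n (s + (i + 1)) - n (s + i)) = n (s + m) - n (s + 0) :=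
    Finset.sum_range_sub (fun i => n (s + i)) m
  have sum1 : n (s + m) - n s = m * d + p * ∑ i ∈ Finset.range m, u (s + i) := by
    have hcg : ∀ i ∈ Finset.range m, n (s + (i + 1)) - n (s + i) = d + p * u (s + i) := by
      intro i hi
      have hi' := Finset.mem_range.mp hi
      have := hup (s + i) (Nat.le_add_right s i) (by omega)
      rw [show s + (i + 1) = s + i + 1 by omega]
      exact this
    rw [← Nat.add_zero s, show s + 0 + m = s + m by omega] at hcong ⊢
    rw [← tele, Finset.sum_congr rfl hcg, Finset.sum_add_distrib, Finset.sum_const,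
      Finset.card_range, ← Finset.mul_sum]
    ring
  have hmfac : (m : ℤ) ∣ (Nat.factorial a : ℤ) :=
    Int.natCast_dvd_natCast.mpr (Nat.dvd_factorial hm hma)
  have hdvd : (m : ℤ) ∣ (m : ℤ) * d + p * ∑ i ∈ Finset.range m, u (s + i) := by
    rw [← sum1]; exact hmfac.trans hcong
  have hdvd2 : (m : ℤ) ∣ (p : ℤ) * ∑ i ∈ Finset.range m, u (s + i) :=
    (dvd_add_right (dvd_mul_right _ _)).mp hdvd
  have hcop : Nat.Coprime m p :=
    (Nat.Coprime.coprime_dvd_right (Nat.dvd_factorial hm hma) hgcd).symm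
  have hcopZ : IsCoprime (m : ℤ) (p : ℤ) := Int.isCoprime_iff_gcd_eq_one.mpr (by
    simpa [Int.gcd_natCast_natCast] using hcop)
  have hdvd3 : (m : ℤ) ∣ ∑ i ∈ Finset.range m, u (s + i) :=
    hcopZ.dvd_of_dvd_mul_left hdvd2
  exact aux_zero_one m (fun i => u (s + i)) (fun i => hu01 (s + i)) hdvd3

theorem stmt_8 (a k p : ℕ) (ha : 0 < a) (hk : 0 < k) (hp : 0 < p)
    (hka : k ≤ a) (hgcd : Nat.gcd p (Nat.factorial a) = 1)
    (n : ℕ → ℤ) (d : ℤ)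
    (hjump : ∀ i : ℕ, i < k - 1 → n (i + 1) - n i = d ∨ n (i + 1) - n i = d + p)
    (k' k'' : ℕ) (h1 : 0 < k') (h2 : k' < k'') (h3 : k'' < k - 1)
    (hcong1 : (Nat.factorial a : ℤ) ∣ n k'' - n 0)
    (hcong2 : (Nat.factorial a : ℤ) ∣ n (k - 1) - n k') :
    ∃ e : ℤ, ∀ i : ℕ, i < k - 1 → n (i + 1) - n i = e := by
  set u : ℕ → ℤ := fun i => if n (i + 1) - n i = d then 0 else 1 with hu
  have hu01 : ∀ i, u i = 0 ∨ u i = 1 := by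
    intro i
    by_cases h : n (i + 1) - n i = d <;> simp [hu, h]
  have hup : ∀ i, i < k - 1 → n (i + 1) - n i = d + p * u i := by
    intro i hi
    rcases hjump i hi with h | h
    · simp [hu, h]
    · have hne : n (i + 1) - n i ≠ d := by
        rw [h]
        have : (0 : ℤ) < p := by exact_mod_cast hp
        intro hc; linarith
      have h1 : u i = 1 := by simp [hu, hne]
      rw [h, h1]; ring
  -- first block: s = 0, m = k''
  have hb1 := aux_block a p hgcd n d u hu01 0 k'' (by omega) (by omega)
    (fun i _ hi => hup i (by omega)) (by simpa using hcong1)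
  -- second block: s = k', m = k - 1 - k'
  have hk1 : k' + (k - 1 - k') = k - 1 := by omega
  have hb2 := aux_block a p hgcd n d u hu01 k' (k - 1 - k') (by omega) (by omega)
    (fun i hi1 hi2 => hup i (by omega)) (by rw [hk1]; exact hcong2)
  simp only [zero_add] at hb1
  rcases hb1 with hA | hA
  · -- all zero on [0, k'')
    have hB : ∀ i < k - 1 - k', u (k' + i) = 0 := by
      rcases hb2 with hB | hB
      · exact hB
      · exfalso
        have h0 : u (k' + 0) = 1 := hB 0 (by omega)
        have h0' : u k' = 0 := hA k' h2
        rw [show k' + 0 = k' by omega] at h0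
        rw [h0'] at h0; exact absurd h0 (by norm_num)
    refine ⟨d, fun i hi => ?_⟩
    rcases lt_or_ge i k'' with hik | hik
    · rw [hup i hi, hA i hik]; ring
    · have : u (k' + (i - k')) = 0 := hB (i - k') (by omega)
      rw [show k' + (i - k') = i by omega] at this
      rw [hup i hi, this]; ring
  · -- all one on [0, k'')
    have hB : ∀ i < k - 1 - k', u (k' + i) = 1 := by
      rcases hb2 with hB | hB
      · exfalso
        have h0 : u (k' + 0) = 0 := hB 0 (by omega)
        have h0' : u k' = 1 := hA k' h2
        rw [show k' + 0 = k' by omega] at h0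
        rw [h0'] at h0; exact absurd h0 (by norm_num)
      · exact hB
    refine ⟨d + p, fun i hi => ?_⟩
    rcases lt_or_ge i k'' with hik | hik
    · rw [hup i hi, hA i hik]; ring
    · have : u (k' + (i - k')) = 1 := hB (i - k') (by omega)
      rw [show k' + (i - k') = i by omega] at this
      rw [hup i hi, this]; ring
end

section
/- Let k be even, let a₁ < ⋯ < a_k be distinct integers with cᵢ = ∏_{j≠i}(aᵢ - aⱼ), and let f be a pairing of [k] (an involution without fixed points such that cᵢ = -c_{f(i)} for all i). If for all 2 ≤ i < f(1) we have f(i) < f(1) and aᵢ + a_{f(i)} = a₁ + a_{f(1)}, then f(1) = k. -/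
open Finset

theorem stmt_11 (k : ℕ) (hk : 0 < k) (hke : Even k)
    (a : Fin k → ℤ) (ha : StrictMono a)
    (c : Fin k → ℤ) (hc : ∀ i, c i = ∏ j ∈ univ.erase i, (a i - a j))
    (f : Fin k → Fin k)
    (hinv : ∀ i, f (f i) = i) (hnf : ∀ i, f i ≠ i)
    (hpair : ∀ i, c i = -c (f i))
    (hyp : ∀ i : Fin k, 0 < i.val → i < f ⟨0, hk⟩ →
      f i < f ⟨0, hk⟩ ∧ a i + a (f i) = a ⟨0, hk⟩ + a (f ⟨0, hk⟩)) :
    (f ⟨0, hk⟩).val = k - 1 := by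
  by_contra hne
  set z : Fin k := ⟨0, hk⟩ with hz
  set m : Fin k := f z with hm
  have hmz : m ≠ z := hnf z
  have hzm : z < m := by
    have : z ≤ m := by simp [Fin.le_def, hz]
    exact lt_of_le_of_ne this (Ne.symm hmz)
  have hz0 : z.val = 0 := rfl
  have hm0 : 0 < (m:ℕ) := by
    have := Fin.lt_def.mp hzm
    omega
  have hmlt : m.val < k - 1 := by
    have h1 : (m:ℕ) < k := m.isLt
    omega
  set S : Finset (Fin k) := univ.filter (fun j => z < j ∧ j < m) with hS
  set T : Finset (Fin k) := univ.filter (fun j => m < j) with hT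
  have hEz : univ.erase z = insert m (S ∪ T) := by
    ext j
    simp only [mem_erase, mem_univ, and_true, mem_insert, mem_union, mem_filter, true_and,
      hS, hT, Fin.lt_def, ne_eq, Fin.ext_iff]
    omega
  have hEm : univ.erase m = insert z (S ∪ T) := by
    ext j
    simp only [mem_erase, mem_univ, and_true, mem_insert, mem_union, mem_filter, true_and,
      hS, hT, Fin.lt_def, ne_eq, Fin.ext_iff]
    omega
  have hmnot : m ∉ S ∪ T := by
    simp only [mem_union, mem_filter, mem_univ, true_and, hS, hT, Fin.lt_def]
    omega
  have hznot : z ∉ S ∪ T := by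
    simp only [mem_union, mem_filter, mem_univ, true_and, hS, hT, Fin.lt_def]
    omega
  have hdisj : Disjoint S T := by
    rw [Finset.disjoint_left]
    intro j hj hj'
    simp only [mem_filter, mem_univ, true_and, hS, hT, Fin.lt_def] at hj hj'
    omega
  -- |c i| = product of abs
  have habs : ∀ i : Fin k, |c i| = ∏ j ∈ univ.erase i, |a i - a j| := by
    intro i; rw [hc i, Finset.abs_prod]
  have hPeq : (∏ j ∈ univ.erase z, |a z - a j|) = ∏ j ∈ univ.erase m, |a m - a j| := by
    rw [← habs, ← habs]
    rw [hpair z, abs_neg, ← hm]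
  rw [hEz, hEm, Finset.prod_insert hmnot, Finset.prod_insert hznot,
    Finset.prod_union hdisj, Finset.prod_union hdisj] at hPeq
  -- S maps to itself under f
  have hfS : ∀ j ∈ S, f j ∈ S := by
    intro j hj
    simp only [mem_filter, mem_univ, true_and, hS] at hj ⊢
    obtain ⟨h1, h2⟩ := hj
    have h1' : (0:ℕ) < j.val := h1
    obtain ⟨hfm, _⟩ := hyp j h1' h2
    refine ⟨?_, hfm⟩
    have hne' : f j ≠ z := by
      intro h
      have hjm : j = m := by rw [hm, ← h, hinv]
      exact absurd (hjm ▸ h2) (lt_irrefl m)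
    have hle : z ≤ f j := by simp [Fin.le_def, hz]
    exact lt_of_le_of_ne hle (Ne.symm hne')
  have hSprod : (∏ j ∈ S, |a z - a j|) = ∏ j ∈ S, |a m - a j| := by
    apply Finset.prod_nbij f hfS
    · intro x _ y _ h
      have := congrArg f h
      rwa [hinv, hinv] at this
    · intro j hj
      exact ⟨f j, hfS j hj, hinv j⟩
    · intro j hj
      simp only [mem_filter, mem_univ, true_and, hS] at hj
      have h1' : (0:ℕ) < j.val := hj.1
      obtain ⟨_, hsum⟩ := hyp j h1' hj.2
      have : a z - a j = a (f j) - a m := by linarith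
      rw [this, abs_sub_comm]
  -- T inequality
  have hTmem : (⟨k - 1, by omega⟩ : Fin k) ∈ T := by
    simp only [mem_filter, mem_univ, true_and, hT, Fin.lt_def]
    exact hmlt
  have hTlt : (∏ j ∈ T, |a m - a j|) < ∏ j ∈ T, |a z - a j| := by
    apply Finset.prod_lt_prod_of_nonempty
    · intro j hj
      simp only [mem_filter, mem_univ, true_and, hT] at hj
      have := ha hj
      rw [abs_sub_comm, abs_of_pos (by linarith)]
      linarith
    · intro j hj
      simp only [mem_filter, mem_univ, true_and, hT] at hj
      have h1 := ha hj
      have h2 := ha (lt_trans hzm hj)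
      have h3 := ha hzm
      rw [abs_sub_comm, abs_of_pos (by linarith), abs_sub_comm, abs_of_pos (by linarith)]
      linarith
    · exact ⟨_, hTmem⟩
  -- combine
  have hzm' : a z < a m := ha hzm
  have habs0 : |a z - a m| = |a m - a z| := abs_sub_comm _ _
  have hpos : (0:ℤ) < |a z - a m| := abs_pos.mpr (by linarith)
  have hSpos : (0:ℤ) < ∏ j ∈ S, |a z - a j| := by
    apply Finset.prod_pos
    intro j hj
    simp only [mem_filter, mem_univ, true_and, hS] at hj
    have := ha hj.1
    exact abs_pos.mpr (by linarith)
  rw [habs0, hSprod] at hPeq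
  have hpos' : (0:ℤ) < |a m - a z| := habs0 ▸ hpos
  have hSpos' : (0:ℤ) < ∏ j ∈ S, |a m - a j| := hSprod ▸ hSpos
  have h1 := mul_left_cancel₀ (ne_of_gt hpos') hPeq
  have h2 := mul_left_cancel₀ (ne_of_gt hSpos') h1
  exact absurd h2.symm (ne_of_lt hTlt)
end

section
/- Let k ≥ 4 be even, let a₁ < ⋯ < a_k be distinct integers with cᵢ = ∏_{j≠i}(aᵢ - aⱼ), and let f be a pairing of [k]. Then at least one of the following holds: (1) there exist i₁ < i₂ < i₃ < i₄ with f(i₁) = i₃ and f(i₂) = i₄; (2) there exist i₁ < i₂ < i₃ < i₄ with f(i₁) = i₄, f(i₂) = i₃, and a_{i₁} + a_{i₄} ≠ a_{i₂} + a_{i₃}; (3) a₁ + a_k = a₂ + a_{k-1} = ⋯ (𝐚 is symmetric) and f(i) = k + 1 - i for all i. -/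
open Finset

theorem stmt_12 (k : ℕ) (hk : 4 ≤ k) (hke : Even k)
    (a : Fin k → ℤ) (ha : StrictMono a)
    (c : Fin k → ℤ) (hc : ∀ i, c i = ∏ j ∈ univ.erase i, (a i - a j))
    (f : Fin k → Fin k)
    (hinv : ∀ i, f (f i) = i) (hnf : ∀ i, f i ≠ i)
    (hpair : ∀ i, c i = -c (f i)) :
    (∃ i₁ i₂ i₃ i₄ : Fin k, i₁ < i₂ ∧ i₂ < i₃ ∧ i₃ < i₄ ∧ f i₁ = i₃ ∧ f i₂ = i₄) ∨
    (∃ i₁ i₂ i₃ i₄ : Fin k, i₁ < i₂ ∧ i₂ < i₃ ∧ i₃ < i₄ ∧ f i₁ = i₄ ∧ f i₂ = i₃ ∧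
      a i₁ + a i₄ ≠ a i₂ + a i₃) ∨
    ((∀ i : Fin k, a i + a i.rev = a ⟨0, by omega⟩ + a (Fin.rev ⟨0, by omega⟩)) ∧
      ∀ i : Fin k, f i = i.rev) := by
  classical
  by_cases h1 : (∃ i₁ i₂ i₃ i₄ : Fin k, i₁ < i₂ ∧ i₂ < i₃ ∧ i₃ < i₄ ∧ f i₁ = i₃ ∧ f i₂ = i₄)
  · exact Or.inl h1
  by_cases h2 : (∃ i₁ i₂ i₃ i₄ : Fin k, i₁ < i₂ ∧ i₂ < i₃ ∧ i₃ < i₄ ∧ f i₁ = i₄ ∧ f i₂ = i₃ ∧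
      a i₁ + a i₄ ≠ a i₂ + a i₃)
  · exact Or.inr (Or.inl h2)
  right; right
  push_neg at h1 h2
  have hk0 : 0 < k := by omega
  set z : Fin k := ⟨0, hk0⟩ with hzdef
  have hinj : Function.Injective f := Function.Involutive.injective hinv
  -- Step 1 : (f z).val = k - 1
  have hlast : (f z).val = k - 1 := by
    by_contra hne
    set m : Fin k := f z with hmdef
    have hmz : m ≠ z := hnf z
    have hm0 : 0 < m.val := by
      rcases Nat.eq_zero_or_pos m.val with h | h
      · exact absurd (Fin.ext h : m = z) hmz
      · exact h
    have hmk : m.val < k - 1 := by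
      have := m.isLt; omega
    have hfm : f m = z := hinv z
    -- closure of the block [0, m]
    have hclosed : ∀ j : Fin k, j.val ≤ m.val → (f j).val ≤ m.val := by
      intro j hj
      by_contra hgt
      push_neg at hgt
      have hjz : j ≠ z := by
        rintro rfl
        exact absurd hgt (by omega)
      have hjm : j ≠ m := by
        rintro rfl
        rw [hfm] at hgt
        simp [hzdef] at hgt
      have hzj : z < j := by
        rw [Fin.lt_def]
        have : j.val ≠ 0 := fun h => hjz (Fin.ext h)
        exact Nat.pos_of_ne_zero this
      have hjm' : j < m := by
        rw [Fin.lt_def]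
        exact lt_of_le_of_ne hj (fun h => hjm (Fin.ext h))
      have hmfj : m < f j := by rw [Fin.lt_def]; exact hgt
      exact h1 z j m (f j) hzj hjm' hmfj hmdef.symm rfl
    -- every pair inside the block has sum a z + a m
    have hsum : ∀ j : Fin k, j.val ≤ m.val → a j + a (f j) = a z + a m := by
      intro j hj
      rcases eq_or_ne j z with rfl | hjz
      · rw [← hmdef]
      rcases eq_or_ne j m with rfl | hjm
      · rw [hfm]; ring
      have hj0 : 0 < j.val := by
        have : j.val ≠ 0 := fun h => hjz (Fin.ext h)
        omega
      have hjm' : j.val < m.val := lt_of_le_of_ne hj (fun h => hjm (Fin.ext h))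
      have hfjz : f j ≠ z := by
        intro h
        exact hjm (by calc j = f (f j) := (hinv j).symm
                        _ = f z := by rw [h]
                        _ = m := hmdef.symm)
      have hfjm : f j ≠ m := by
        intro h
        exact hjz (by calc j = f (f j) := (hinv j).symm
                        _ = f m := by rw [h]
                        _ = z := hfm)
      have hfjle : (f j).val ≤ m.val := hclosed j hj
      have hfj0 : 0 < (f j).val := by
        have : (f j).val ≠ 0 := fun h => hfjz (Fin.ext h)
        omega
      have hfjm' : (f j).val < m.val := lt_of_le_of_ne hfjle (fun h => hfjm (Fin.ext h))
      rcases lt_trichotomy j (f j) with hlt | heq | hgt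
      · have := h2 z j (f j) m (by rw [Fin.lt_def]; exact hj0) hlt
          (by rw [Fin.lt_def]; exact hfjm') hmdef.symm rfl
        linarith
      · exact absurd heq.symm (hnf j)
      · have := h2 z (f j) j m (by rw [Fin.lt_def]; exact hfj0) hgt
          (by rw [Fin.lt_def]; exact hjm') hmdef.symm (hinv j)
        linarith
    -- Finsets
    set P : Finset (Fin k) := univ.filter (fun j => j.val < m.val) with hP
    set Q : Finset (Fin k) := univ.filter (fun j => 0 < j.val ∧ j.val ≤ m.val) with hQ
    set R : Finset (Fin k) := univ.filter (fun j => m.val < j.val) with hR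
    have himg : P.image f = Q := by
      ext t
      simp only [hP, hQ, Finset.mem_image, Finset.mem_filter, Finset.mem_univ, true_and]
      constructor
      · rintro ⟨j, hj, rfl⟩
        have h1' : (f j).val ≤ m.val := hclosed j (le_of_lt hj)
        have h2' : f j ≠ z := by
          intro h
          have hjeq : j = m := by
            calc j = f (f j) := (hinv j).symm
              _ = f z := by rw [h]
              _ = m := hmdef.symm
          rw [hjeq] at hj
          exact lt_irrefl _ hj
        constructor
        · have : (f j).val ≠ 0 := fun h => h2' (Fin.ext h)
          omega
        · exact h1'
      · rintro ⟨ht0, htm⟩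
        refine ⟨f t, ?_, hinv t⟩
        have h1' : (f t).val ≤ m.val := hclosed t htm
        have h2' : f t ≠ m := by
          intro h
          have hteq : t = z := by
            calc t = f (f t) := (hinv t).symm
              _ = f m := by rw [h]
              _ = z := hfm
          rw [hteq] at ht0
          exact lt_irrefl _ ht0
        exact lt_of_le_of_ne h1' (fun h => h2' (Fin.ext h))
    have hPprod : ∏ j ∈ P, (a m - a j) = ∏ j ∈ Q, (a j - a z) := by
      rw [← himg, Finset.prod_image (fun x _ y _ h => hinj h)]
      apply Finset.prod_congr rfl
      intro j hj
      simp only [hP, Finset.mem_filter] at hj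
      have := hsum j (le_of_lt hj.2)
      linarith
    have hsplit0 : univ.erase z = Q ∪ R := by
      ext j
      simp only [Finset.mem_erase, Finset.mem_union, Finset.mem_filter, Finset.mem_univ,
        true_and, and_true, hQ, hR]
      constructor
      · intro hj
        have : j.val ≠ 0 := fun h => hj (Fin.ext h)
        omega
      · intro hj
        intro h
        subst h
        have hz0 : z.val = 0 := rfl
        rcases hj with hj | hj
        · omega
        · omega
    have hsplitm : univ.erase m = P ∪ R := by
      ext j
      simp only [Finset.mem_erase, Finset.mem_union, Finset.mem_filter, Finset.mem_univ,
        true_and, and_true, hP, hR]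
      constructor
      · intro hj
        have : j.val ≠ m.val := fun h => hj (Fin.ext h)
        omega
      · intro hj
        intro h
        subst h
        omega
    have hdisjQR : Disjoint Q R := by
      rw [Finset.disjoint_left]
      intro x hx hx'
      simp only [hQ, hR, Finset.mem_filter] at hx hx'
      omega
    have hdisjPR : Disjoint P R := by
      rw [Finset.disjoint_left]
      intro x hx hx'
      simp only [hP, hR, Finset.mem_filter] at hx hx'
      omega
    have habs0 : |c z| = (∏ j ∈ Q, (a j - a z)) * (∏ j ∈ R, (a j - a z)) := by
      rw [hc z, Finset.abs_prod, hsplit0, Finset.prod_union hdisjQR]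
      congr 1 <;>
      · apply Finset.prod_congr rfl
        intro j hj
        simp only [hQ, hR, Finset.mem_filter] at hj
        have : a z < a j := ha (by rw [Fin.lt_def]; simp [hzdef]; omega)
        rw [abs_sub_comm, abs_of_pos (by linarith)]
    have habsm : |c m| = (∏ j ∈ P, (a m - a j)) * (∏ j ∈ R, (a j - a m)) := by
      rw [hc m, Finset.abs_prod, hsplitm, Finset.prod_union hdisjPR]
      congr 1
      · apply Finset.prod_congr rfl
        intro j hj
        simp only [hP, Finset.mem_filter] at hj
        have : a j < a m := ha (by rw [Fin.lt_def]; exact hj.2)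
        rw [abs_of_pos (by linarith)]
      · apply Finset.prod_congr rfl
        intro j hj
        simp only [hR, Finset.mem_filter] at hj
        have : a m < a j := ha (by rw [Fin.lt_def]; exact hj.2)
        rw [abs_sub_comm, abs_of_pos (by linarith)]
    have heqabs : |c z| = |c m| := by
      rw [hpair z, ← hmdef, abs_neg]
    have hQpos : 0 < ∏ j ∈ Q, (a j - a z) := by
      apply Finset.prod_pos
      intro j hj
      simp only [hQ, Finset.mem_filter] at hj
      have : a z < a j := ha (by rw [Fin.lt_def]; simp [hzdef]; omega)
      linarith
    have hcancel : ∏ j ∈ R, (a j - a z) = ∏ j ∈ R, (a j - a m) := by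
      have := heqabs
      rw [habs0, habsm, hPprod] at this
      exact mul_left_cancel₀ (ne_of_gt hQpos) this
    have hRne : R.Nonempty := by
      refine ⟨⟨k - 1, by omega⟩, ?_⟩
      simp only [hR, Finset.mem_filter, Finset.mem_univ, true_and]
      omega
    have hlt : ∏ j ∈ R, (a j - a m) < ∏ j ∈ R, (a j - a z) := by
      apply Finset.prod_lt_prod_of_nonempty _ _ hRne
      · intro j hj
        simp only [hR, Finset.mem_filter] at hj
        have : a m < a j := ha (by rw [Fin.lt_def]; exact hj.2)
        linarith
      · intro j hj
        have : a z < a m := ha (by rw [Fin.lt_def]; simpa [hzdef] using hm0)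
        linarith
    rw [hcancel] at hlt
    exact lt_irrefl _ hlt
  -- Step 2 : define l and prove all chords have sum a z + a l
  set l : Fin k := ⟨k - 1, by omega⟩ with hldef
  have hfz : f z = l := Fin.ext (by rw [hlast])
  have hfl : f l = z := by rw [← hfz, hinv]
  have hS : ∀ i : Fin k, a i + a (f i) = a z + a l := by
    intro i
    rcases eq_or_ne i z with rfl | hiz
    · rw [hfz]
    rcases eq_or_ne i l with rfl | hil
    · rw [hfl]; ring
    have hi0 : 0 < i.val := by
      have : i.val ≠ 0 := fun h => hiz (Fin.ext h)
      omega
    have hik : i.val < k - 1 := by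
      have : i.val ≠ k - 1 := fun h => hil (Fin.ext h)
      have := i.isLt; omega
    have hfiz : f i ≠ z := by
      intro h
      exact hil (by calc i = f (f i) := (hinv i).symm
                      _ = f z := by rw [h]
                      _ = l := hfz)
    have hfil : f i ≠ l := by
      intro h
      exact hiz (by calc i = f (f i) := (hinv i).symm
                      _ = f l := by rw [h]
                      _ = z := hfl)
    have hfi0 : 0 < (f i).val := by
      have : (f i).val ≠ 0 := fun h => hfiz (Fin.ext h)
      omega
    have hfik : (f i).val < k - 1 := by
      have : (f i).val ≠ k - 1 := fun h => hfil (Fin.ext h)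
      have := (f i).isLt; omega
    rcases lt_trichotomy i (f i) with hlt | heq | hgt
    · have := h2 z i (f i) l (by rw [Fin.lt_def]; exact hi0) hlt
        (by rw [Fin.lt_def]; exact hfik) hfz rfl
      linarith
    · exact absurd heq.symm (hnf i)
    · have := h2 z (f i) i l (by rw [Fin.lt_def]; exact hfi0) hgt
        (by rw [Fin.lt_def]; exact hik) hfz (hinv i)
      linarith
  -- Step 3 : f is strictly antitone, so rev ∘ f is strictly monotone, hence the identity
  have hanti : ∀ i j : Fin k, i < j → f j < f i := by
    intro i j hij
    have h1' : a i < a j := ha hij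
    have h2' : a (f j) < a (f i) := by
      have si := hS i
      have sj := hS j
      linarith
    exact (ha.lt_iff_lt).mp h2'
  set g : Fin k → Fin k := fun i => (f i).rev with hgdef
  have hgmono : StrictMono g := by
    intro i j hij
    simp only [hgdef]
    exact Fin.rev_lt_rev.mpr (hanti i j hij)
  have hgbij : Function.Bijective g := by
    have hfb : Function.Bijective f := Function.Involutive.bijective hinv
    exact (Fin.rev_bijective).comp hfb
  have hle : ∀ n : ℕ, ∀ i : Fin k, i.val = n → n ≤ (g i).val := by
    intro n
    induction n with
    | zero => intro i _; omega
    | succ t ih =>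
      intro i hi
      have ht : t < k := by have := i.isLt; omega
      have h1' : (⟨t, ht⟩ : Fin k) < i := by rw [Fin.lt_def]; simp [hi]
      have h2' := hgmono h1'
      have h3' := ih ⟨t, ht⟩ rfl
      rw [Fin.lt_def] at h2'
      omega
    -- end
  have hsum' : ∑ i : Fin k, (i.val) = ∑ i : Fin k, (g i).val := by
    exact (Fintype.sum_bijective g hgbij (fun i => (g i).val) (fun t => t.val)
      (fun i => rfl)).symm
  have hgeq : ∀ i : Fin k, g i = i := by
    have := (Finset.sum_eq_sum_iff_of_le
      (f := fun i : Fin k => i.val) (g := fun i : Fin k => (g i).val)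
      (fun i _ => hle i.val i rfl)).mp (by simpa using hsum')
    intro i
    have := this i (Finset.mem_univ i)
    exact Fin.ext this.symm
  have hfrev : ∀ i : Fin k, f i = i.rev := by
    intro i
    have h := hgeq i
    simp only [hgdef] at h
    have h2' := congrArg Fin.rev h
    rwa [Fin.rev_rev] at h2'
  constructor
  · intro i
    show a i + a i.rev = a z + a (Fin.rev z)
    have hrz : Fin.rev z = l := by
      apply Fin.ext
      rw [Fin.val_rev]
    rw [hrz, ← hfrev i]
    exact hS i
  · exact hfrev
end

section
/- If there exists an r-coloring of [N] with no symmetrically colored non-trivial k-AP (k even), then there exists a (kr)-coloring of ℤ/(kN)ℤ with no symmetrically colored non-trivial k-AP. -/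
set_option maxHeartbeats 2000000 in
theorem stmt_16 (k N r : ℕ) (hk : 4 ≤ k) (hke : Even k) (hN : 0 < N)
    (φ : ℕ → Fin r)
    (hφ : ∀ n d : ℕ, 0 < d → n + (k - 1) * d < N →
      ∃ i : ℕ, i < k / 2 ∧ φ (n + i * d) ≠ φ (n + (k - 1 - i) * d)) :
    ∃ ψ : ZMod (k * N) → Fin (k * r),
      ∀ n d : ZMod (k * N), d ≠ 0 →
        ∃ i : ℕ, i < k / 2 ∧ ψ (n + i • d) ≠ ψ (n + (k - 1 - i) • d) := by
  rcases Nat.eq_zero_or_pos r with hr | hr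
  · subst hr; exact (φ 0).elim0
  haveI : NeZero (k * N) := ⟨by positivity⟩
  have hb : ∀ x : ZMod (k * N), x.val / N * r + (φ (x.val % N)).val < k * r := by
    intro x
    have h1 : x.val / N < k := (Nat.div_lt_iff_lt_mul hN).2 x.val_lt
    calc x.val / N * r + (φ (x.val % N)).val < x.val / N * r + r :=
          Nat.add_lt_add_left (φ _).isLt _
      _ = (x.val / N + 1) * r := by ring
      _ ≤ k * r := Nat.mul_le_mul_right _ (by omega)
  refine ⟨fun x => ⟨x.val / N * r + (φ (x.val % N)).val, hb x⟩, fun n d hd => ?_⟩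
  by_contra hcon
  push_neg at hcon
  simp only [Fin.mk.injEq] at hcon
  have auxdm : ∀ q1 c1 q2 c2 : ℕ, c1 < r → c2 < r →
      q1 * r + c1 = q2 * r + c2 → q1 = q2 ∧ c1 = c2 := by
    intro q1 c1 q2 c2 h1 h2 h
    have e1 : (q1 * r + c1) % r = c1 % r := by rw [Nat.mul_comm]; exact Nat.mul_add_mod _ _ _
    have e2 : (q2 * r + c2) % r = c2 % r := by rw [Nat.mul_comm]; exact Nat.mul_add_mod _ _ _
    rw [Nat.mod_eq_of_lt h1] at e1
    rw [Nat.mod_eq_of_lt h2] at e2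
    rw [h] at e1
    have hc : c1 = c2 := by omega
    subst hc
    have hq : q1 * r = q2 * r := by omega
    exact ⟨Nat.eq_of_mul_eq_mul_right hr hq, rfl⟩
  have key : ∀ i : ℕ, i < k / 2 →
      (n + i • d).val / N = (n + (k - 1 - i) • d).val / N ∧
      φ ((n + i • d).val % N) = φ ((n + (k - 1 - i) • d).val % N) := by
    intro i hi
    obtain ⟨h1, h2⟩ := auxdm _ _ _ _ (φ _).isLt (φ _).isLt (hcon i hi)
    exact ⟨h1, Fin.val_injective h2⟩
  -- blockdiff
  have blockdiff : ∀ a b : ZMod (k * N), a.val / N = b.val / N →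
      (b.val : ℤ) - a.val = ((b.val % N : ℕ) : ℤ) - ((a.val % N : ℕ) : ℤ) := by
    intro a b h
    have ha := Nat.div_add_mod a.val N
    have hb' := Nat.div_add_mod b.val N
    rw [h] at ha
    zify at ha hb'
    push_cast
    linarith
  have hmodlt : ∀ a : ZMod (k * N), a.val % N < N := fun a => Nat.mod_lt _ hN
  -- general congruence
  have hcast : ∀ i : ℕ, ((((n + i • d).val : ℕ) : ℤ) : ZMod (k * N)) = n + i • d := by
    intro i
    push_cast
    simp [ZMod.natCast_val, ZMod.cast_id]
  have hcong : ∀ i j : ℕ, ((((n + j • d).val : ℤ) - ((n + i • d).val : ℤ) : ℤ) : ZMod (k * N))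
      = ((j : ZMod (k * N)) - (i : ZMod (k * N))) * d := by
    intro i j
    push_cast [hcast]
    simp only [nsmul_eq_mul]
    ring
  have hcastN : ∀ i : ℕ, (((n + i • d).val : ℕ) : ZMod (k * N)) = n + i • d := by
    intro i
    simp [ZMod.natCast_val, ZMod.cast_id]
  have hdvd : ∀ x : ℤ, ((x : ZMod (k * N)) = 0) → ((k * N : ℕ) : ℤ) ∣ x :=
    fun x hx => (ZMod.intCast_zmod_eq_zero_iff_dvd x (k * N)).1 hx
  have hval : ∀ i : ℕ, ((n + i • d).val : ℤ) < ((k * N : ℕ) : ℤ) := by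
    intro i; exact_mod_cast (n + i • d).val_lt
  have hone : (1:ℕ) ≤ k / 2 := by omega
  have hde : (n + (k/2) • d) - (n + (k/2 - 1) • d) = d := by
    simp only [nsmul_eq_mul, Nat.cast_sub hone]
    push_cast
    ring
  set e : ℤ := ((n + (k/2) • d).val : ℤ) - ((n + (k/2 - 1) • d).val : ℤ) with he
  have hpair : k - 1 - (k/2 - 1) = k / 2 := by
    obtain ⟨m, hm⟩ := hke; omega
  have hkey1 := key (k/2 - 1) (by omega)
  rw [hpair] at hkey1
  have heN : e = (((n + (k/2) • d).val % N : ℕ) : ℤ) - (((n + (k/2 - 1) • d).val % N : ℕ) : ℤ) :=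
    blockdiff _ _ hkey1.1
  have heabs : -(N:ℤ) < e ∧ e < N := by
    have h1 := hmodlt (n + (k/2) • d)
    have h2 := hmodlt (n + (k/2 - 1) • d)
    omega
  have hecast : ((e : ℤ) : ZMod (k * N)) = d := by
    rw [he]
    push_cast
    rw [hcastN, hcastN, hde]
  have hene : e ≠ 0 := by
    intro h0
    apply hd
    rw [← hecast, h0]
    simp
  -- divisibility for each i
  have hcongd : ∀ i : ℕ, ((k * N : ℕ) : ℤ) ∣
      (((n + i • d).val : ℤ) - ((n + (0:ℕ) • d).val : ℤ) - (i : ℤ) * e) := by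
    intro i
    apply hdvd
    push_cast
    rw [hcastN, hcastN, hecast]
    simp only [nsmul_eq_mul]
    push_cast
    ring
  -- pair 0 : v(k-1) - v0 = (k-1) * e
  have hkey0 := key 0 (by omega)
  rw [Nat.sub_zero] at hkey0
  have hf := blockdiff _ _ hkey0.1
  have hk1c : ((k - 1 : ℕ) : ℤ) = (k : ℤ) - 1 := by push_cast [Nat.cast_sub (by omega : 1 ≤ k)]; ring
  have hfe : ((n + (k-1) • d).val : ℤ) = ((n + (0:ℕ) • d).val : ℤ) + ((k:ℤ) - 1) * e := by
    have hdv := hcongd (k - 1)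
    rw [hk1c] at hdv
    have hb1 := hmodlt (n + (k-1) • d)
    have hb2 := hmodlt (n + (0:ℕ) • d)
    have habs : |((n + (k-1) • d).val : ℤ) - ((n + (0:ℕ) • d).val : ℤ) - ((k:ℤ) - 1) * e| < ((k * N : ℕ) : ℤ) := by
      have hmn : ((k * N : ℕ) : ℤ) = (k:ℤ) * (N:ℤ) := by push_cast; ring
      rw [hmn, abs_lt]
      have hkk : (4:ℤ) ≤ (k:ℤ) := by exact_mod_cast hk
      have hNN : (1:ℤ) ≤ (N:ℤ) := by exact_mod_cast hN
      have hke1 : ((k:ℤ) - 1) * e < ((k:ℤ) - 1) * (N:ℤ) := by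
        apply mul_lt_mul_of_pos_left heabs.2; linarith
      have hke2 : -(((k:ℤ) - 1) * (N:ℤ)) < ((k:ℤ) - 1) * e := by
        have := mul_lt_mul_of_pos_left heabs.1 (by linarith : (0:ℤ) < (k:ℤ) - 1)
        linarith [this]
      have hexp : ((k:ℤ) - 1) * (N:ℤ) = (k:ℤ) * (N:ℤ) - N := by ring
      have m2lt : (((n + (k-1) • d).val % N : ℕ) : ℤ) < N := by exact_mod_cast hb1
      have m1lt : (((n + (0:ℕ) • d).val % N : ℕ) : ℤ) < N := by exact_mod_cast hb2
      have m2ge : (0:ℤ) ≤ (((n + (k-1) • d).val % N : ℕ) : ℤ) := Int.ofNat_nonneg _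
      have m1ge : (0:ℤ) ≤ (((n + (0:ℕ) • d).val % N : ℕ) : ℤ) := Int.ofNat_nonneg _
      constructor <;> linarith [hf]
    have := Int.eq_zero_of_abs_lt_dvd hdv habs
    linarith
  -- general : v i = v0 + i * e for i ≤ k-1
  have hvv : ∀ i : ℕ, i ≤ k - 1 → ((n + i • d).val : ℤ) = ((n + (0:ℕ) • d).val : ℤ) + (i:ℤ) * e := by
    intro i hi
    have hdv := hcongd i
    have h0n : (0:ℤ) ≤ ((n + (0:ℕ) • d).val : ℤ) := Int.ofNat_nonneg _
    have h0l : ((n + (0:ℕ) • d).val : ℤ) < ((k * N : ℕ) : ℤ) := hval 0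
    have hkn : (0:ℤ) ≤ ((n + i • d).val : ℤ) := Int.ofNat_nonneg _
    have hkl : ((n + i • d).val : ℤ) < ((k * N : ℕ) : ℤ) := hval i
    have hk1n : (0:ℤ) ≤ ((n + (k-1) • d).val : ℤ) := Int.ofNat_nonneg _
    have hk1l : ((n + (k-1) • d).val : ℤ) < ((k * N : ℕ) : ℤ) := hval (k-1)
    have hik : (i:ℤ) ≤ (k:ℤ) - 1 := by
      have : (i:ℤ) ≤ ((k-1:ℕ):ℤ) := by exact_mod_cast hi
      omega
    have hin : (0:ℤ) ≤ (i:ℤ) := Int.ofNat_nonneg _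
    have hbound : 0 ≤ ((n + (0:ℕ) • d).val : ℤ) + (i:ℤ) * e ∧
        ((n + (0:ℕ) • d).val : ℤ) + (i:ℤ) * e < ((k * N : ℕ) : ℤ) := by
      rcases le_or_gt 0 e with hee | hee
      · have h1 : (i:ℤ) * e ≤ ((k:ℤ) - 1) * e := mul_le_mul_of_nonneg_right hik hee
        have h2 : 0 ≤ (i:ℤ) * e := mul_nonneg hin hee
        constructor <;> linarith [hfe]
      · have h1 : ((k:ℤ) - 1) * e ≤ (i:ℤ) * e := by
          apply mul_le_mul_of_nonpos_right hik (le_of_lt hee)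
        have h2 : (i:ℤ) * e ≤ 0 := mul_nonpos_of_nonneg_of_nonpos hin (le_of_lt hee)
        constructor <;> linarith [hfe]
    have habs : |((n + i • d).val : ℤ) - ((n + (0:ℕ) • d).val : ℤ) - (i:ℤ) * e| < ((k * N : ℕ) : ℤ) := by
      rw [abs_lt]; constructor <;> linarith [hbound.1, hbound.2]
    have := Int.eq_zero_of_abs_lt_dvd hdv habs
    linarith
  clear_value e
  -- mod positions : m_i = m_0 + i * e
  have hmm : ∀ i : ℕ, i ≤ k - 1 →
      (((n + i • d).val % N : ℕ) : ℤ) = (((n + (0:ℕ) • d).val % N : ℕ) : ℤ) + (i:ℤ) * e := by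
    intro i hi
    have hmk1 : (((n + (k-1) • d).val % N : ℕ) : ℤ)
        = (((n + (0:ℕ) • d).val % N : ℕ) : ℤ) + ((k:ℤ) - 1) * e := by
      linarith [hf, hfe]
    have hik : (i:ℤ) ≤ (k:ℤ) - 1 := by
      have h' : (i:ℤ) ≤ ((k-1:ℕ):ℤ) := by exact_mod_cast hi
      omega
    have hin : (0:ℤ) ≤ (i:ℤ) := Int.ofNat_nonneg _
    have m0ge : (0:ℤ) ≤ (((n + (0:ℕ) • d).val % N : ℕ) : ℤ) := Int.ofNat_nonneg _
    have m0lt : (((n + (0:ℕ) • d).val % N : ℕ) : ℤ) < N := by exact_mod_cast hmodlt (n + (0:ℕ) • d)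
    have mkge : (0:ℤ) ≤ (((n + (k-1) • d).val % N : ℕ) : ℤ) := Int.ofNat_nonneg _
    have mklt : (((n + (k-1) • d).val % N : ℕ) : ℤ) < N := by exact_mod_cast hmodlt (n + (k-1) • d)
    have hP : 0 ≤ (((n + (0:ℕ) • d).val % N : ℕ) : ℤ) + (i:ℤ) * e ∧
        (((n + (0:ℕ) • d).val % N : ℕ) : ℤ) + (i:ℤ) * e < N := by
      rcases le_or_gt 0 e with hee | hee
      · have h1 : (i:ℤ) * e ≤ ((k:ℤ) - 1) * e := mul_le_mul_of_nonneg_right hik hee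
        have h2 : 0 ≤ (i:ℤ) * e := mul_nonneg hin hee
        constructor <;> linarith [hmk1]
      · have h1 : ((k:ℤ) - 1) * e ≤ (i:ℤ) * e :=
          mul_le_mul_of_nonpos_right hik (le_of_lt hee)
        have h2 : (i:ℤ) * e ≤ 0 := mul_nonpos_of_nonneg_of_nonpos hin (le_of_lt hee)
        constructor <;> linarith [hmk1]
    have hqi : (N:ℤ) * (((n + i • d).val / N : ℕ) : ℤ) + (((n + i • d).val % N : ℕ) : ℤ)
        = ((n + i • d).val : ℤ) := by exact_mod_cast Nat.div_add_mod (n + i • d).val N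
    have hq0 : (N:ℤ) * (((n + (0:ℕ) • d).val / N : ℕ) : ℤ) + (((n + (0:ℕ) • d).val % N : ℕ) : ℤ)
        = ((n + (0:ℕ) • d).val : ℤ) := by exact_mod_cast Nat.div_add_mod (n + (0:ℕ) • d).val N
    have hvie := hvv i hi
    have hdvN : (N:ℤ) ∣ ((((n + i • d).val % N : ℕ) : ℤ)
        - ((((n + (0:ℕ) • d).val % N : ℕ) : ℤ) + (i:ℤ) * e)) := by
      refine ⟨(((n + (0:ℕ) • d).val / N : ℕ) : ℤ) - (((n + i • d).val / N : ℕ) : ℤ), ?_⟩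
      linear_combination hqi - hq0 + hvie
    have habs : |(((n + i • d).val % N : ℕ) : ℤ)
        - ((((n + (0:ℕ) • d).val % N : ℕ) : ℤ) + (i:ℤ) * e)| < (N:ℤ) := by
      rw [abs_lt]
      have milt : (((n + i • d).val % N : ℕ) : ℤ) < N := by exact_mod_cast hmodlt (n + i • d)
      have mige : (0:ℤ) ≤ (((n + i • d).val % N : ℕ) : ℤ) := Int.ofNat_nonneg _
      constructor <;> linarith [hP.1, hP.2]
    have hz := Int.eq_zero_of_abs_lt_dvd hdvN habs
    linarith
  -- final contradiction
  have hmmk := hmm (k-1) (le_refl _)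
  rcases lt_or_gt_of_ne hene with hneg | hpos
  · -- e < 0 : reversed AP
    set d₀ : ℕ := (-e).toNat with hd₀
    have hd0e : ((d₀ : ℕ) : ℤ) = -e := by rw [hd₀]; exact Int.toNat_of_nonneg (by linarith)
    have hd0pos : 0 < d₀ := by rw [hd₀]; omega
    have hbnd : (n + (k-1) • d).val % N + (k - 1) * d₀ < N := by
      have hlt : (((n + (0:ℕ) • d).val % N : ℕ) : ℤ) < N := by exact_mod_cast hmodlt (n + (0:ℕ) • d)
      have hgoal : (((n + (k-1) • d).val % N : ℕ) : ℤ) + ((k-1:ℕ):ℤ) * (d₀:ℤ) < N := by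
        rw [hd0e]; linarith [hmmk]
      exact_mod_cast hgoal
    obtain ⟨i, hi, hne⟩ := hφ ((n + (k-1) • d).val % N) d₀ hd0pos hbnd
    apply hne
    have hik : i ≤ k - 1 := by omega
    have hik2 : k - 1 - i ≤ k - 1 := by omega
    have hc1 : ((k-1-i : ℕ) : ℤ) = ((k-1:ℕ):ℤ) - i := by
      have : k - 1 - i + i = k - 1 := by omega
      have h2 : ((k-1-i:ℕ):ℤ) + i = ((k-1:ℕ):ℤ) := by exact_mod_cast congrArg (Nat.cast : ℕ → ℤ) this
      linarith
    have e1 : (n + (k-1) • d).val % N + i * d₀ = (n + (k-1-i) • d).val % N := by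
      have h' : (((n + (k-1-i) • d).val % N : ℕ) : ℤ)
          = (((n + (k-1) • d).val % N : ℕ) : ℤ) + (i:ℤ) * (d₀:ℤ) := by
        rw [hmm (k-1-i) hik2, hmmk, hc1, hd0e]; ring
      exact_mod_cast h'.symm
    have e2 : (n + (k-1) • d).val % N + (k-1-i) * d₀ = (n + i • d).val % N := by
      have h' : (((n + i • d).val % N : ℕ) : ℤ)
          = (((n + (k-1) • d).val % N : ℕ) : ℤ) + ((k-1-i:ℕ):ℤ) * (d₀:ℤ) := by
        rw [hmm i hik, hmmk, hc1, hd0e]; ring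
      exact_mod_cast h'.symm
    rw [e1, e2]
    exact ((key i hi).2).symm
  · -- e > 0
    set d₀ : ℕ := e.toNat with hd₀
    have hd0e : ((d₀ : ℕ) : ℤ) = e := by rw [hd₀]; exact Int.toNat_of_nonneg (by linarith)
    have hd0pos : 0 < d₀ := by rw [hd₀]; omega
    have hbnd : (n + (0:ℕ) • d).val % N + (k - 1) * d₀ < N := by
      have hlt : (((n + (k-1) • d).val % N : ℕ) : ℤ) < N := by exact_mod_cast hmodlt (n + (k-1) • d)
      have hgoal : (((n + (0:ℕ) • d).val % N : ℕ) : ℤ) + ((k-1:ℕ):ℤ) * (d₀:ℤ) < N := by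
        rw [hd0e]; linarith [hmmk]
      exact_mod_cast hgoal
    obtain ⟨i, hi, hne⟩ := hφ ((n + (0:ℕ) • d).val % N) d₀ hd0pos hbnd
    apply hne
    have hik : i ≤ k - 1 := by omega
    have hik2 : k - 1 - i ≤ k - 1 := by omega
    have hc1 : ((k-1-i : ℕ) : ℤ) = ((k-1:ℕ):ℤ) - i := by
      have h0 : k - 1 - i + i = k - 1 := by omega
      have h2 : ((k-1-i:ℕ):ℤ) + i = ((k-1:ℕ):ℤ) := by exact_mod_cast congrArg (Nat.cast : ℕ → ℤ) h0
      linarith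
    have e1 : (n + (0:ℕ) • d).val % N + i * d₀ = (n + i • d).val % N := by
      have h' : (((n + i • d).val % N : ℕ) : ℤ)
          = (((n + (0:ℕ) • d).val % N : ℕ) : ℤ) + (i:ℤ) * (d₀:ℤ) := by
        rw [hmm i hik, hd0e]
      exact_mod_cast h'.symm
    have e2 : (n + (0:ℕ) • d).val % N + (k-1-i) * d₀ = (n + (k-1-i) • d).val % N := by
      have h' : (((n + (k-1-i) • d).val % N : ℕ) : ℤ)
          = (((n + (0:ℕ) • d).val % N : ℕ) : ℤ) + ((k-1-i:ℕ):ℤ) * (d₀:ℤ) := by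
        rw [hmm (k-1-i) hik2, hd0e, hc1]
      exact_mod_cast h'.symm
    rw [e1, e2]
    exact (key i hi).2
end

section
/- The 3-coloring of ℤ/22ℤ given by the sequence 1,3,3,3,2,2,1,2,3,2,1,3,1,2,1,1,3,3,3,2,3,3 (coloring positions 0 through 21) has no symmetrically colored non-trivial 4-AP: there is no n and d ≠ 0 in ℤ/22ℤ with φ(n) = φ(n+3d) and φ(n+d) = φ(n+2d). -/
theorem stmt_17 (φ : ZMod 22 → ℕ)
    (hφ : ∀ x : ZMod 22,
      φ x = [1, 3, 3, 3, 2, 2, 1, 2, 3, 2, 1, 3, 1, 2, 1, 1, 3, 3, 3, 2, 3, 3].getD x.val 0) :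
    ¬ ∃ n d : ZMod 22, d ≠ 0 ∧ φ n = φ (n + 3 * d) ∧ φ (n + d) = φ (n + 2 * d) := by
  simp only [hφ]
  decide
end

section
/- Let m ≥ 2, k ≥ 2, and let s₁, …, s_k ∈ {0, 1, …, m-1}. Suppose y₁, …, y_k ∈ ℝ/ℤ satisfy sᵢ/m ≤ yᵢ < sᵢ/m + 1/(2ᵏ m) (as reals, taking representatives) for all i, and ∑_{i=1}^k (-1)ⁱ C(k-1, i-1) yᵢ = 0 in ℝ/ℤ. Then ∑_{i=1}^k (-1)ⁱ C(k-1, i-1) sᵢ ≡ 0 (mod m). -/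
open Finset

theorem stmt_19 (m k : ℕ) (hm : 2 ≤ m) (hk : 2 ≤ k)
    (s : Fin k → ℕ) (hs : ∀ i, s i < m)
    (y : Fin k → ℝ)
    (hy : ∀ i, (s i : ℝ) / m ≤ y i ∧ y i < (s i : ℝ) / m + 1 / (2 ^ k * m))
    (hsum : ∃ z : ℤ,
      ∑ i : Fin k, (-1 : ℝ) ^ (i.val + 1) * ((k - 1).choose i.val) * y i = z) :
    (m : ℤ) ∣ ∑ i : Fin k, (-1 : ℤ) ^ (i.val + 1) * ((k - 1).choose i.val) * s i := by
  obtain ⟨z, hz⟩ := hsum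
  have hmR : (0 : ℝ) < m := by positivity
  set T : ℤ := ∑ i : Fin k, (-1 : ℤ) ^ (i.val + 1) * ((k - 1).choose i.val) * s i with hT
  have hchoose : ∑ i : Fin k, (((k - 1).choose i.val : ℝ)) = 2 ^ (k - 1) := by
    rw [Fin.sum_univ_eq_sum_range (fun i => (((k - 1).choose i : ℝ)))]
    have : k = (k - 1) + 1 := by omega
    rw [this]
    exact_mod_cast congrArg (Nat.cast : ℕ → ℝ) (Nat.sum_range_choose (k - 1))
  have h1 : |((T : ℝ)) - m * z| < 1 := by
    have hTr : (T : ℝ) = ∑ i : Fin k, (-1 : ℝ) ^ (i.val + 1) * ((k - 1).choose i.val) * (s i) := by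
      rw [hT]; push_cast; ring
    rw [hTr, ← hz, Finset.mul_sum, ← Finset.sum_sub_distrib]
    have hrw : ∀ i : Fin k,
        (-1 : ℝ) ^ (i.val + 1) * ((k - 1).choose i.val) * (s i) -
          m * ((-1 : ℝ) ^ (i.val + 1) * ((k - 1).choose i.val) * y i)
        = (-1 : ℝ) ^ (i.val + 1) * ((k - 1).choose i.val) * ((s i : ℝ) - m * y i) := by
      intro i; ring
    calc |∑ i : Fin k, ((-1 : ℝ) ^ (i.val + 1) * ((k - 1).choose i.val) * (s i) -
          m * ((-1 : ℝ) ^ (i.val + 1) * ((k - 1).choose i.val) * y i))|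
        ≤ ∑ i : Fin k, |(-1 : ℝ) ^ (i.val + 1) * ((k - 1).choose i.val) * (s i) -
          m * ((-1 : ℝ) ^ (i.val + 1) * ((k - 1).choose i.val) * y i)| :=
          Finset.abs_sum_le_sum_abs _ _
      _ ≤ ∑ i : Fin k, ((k - 1).choose i.val : ℝ) * (1 / 2 ^ k) := by
          refine Finset.sum_le_sum fun i _ => ?_
          rw [hrw i, abs_mul, abs_mul, abs_pow, abs_neg, abs_one, one_pow, one_mul,
            Nat.abs_cast]
          refine mul_le_mul_of_nonneg_left ?_ (by positivity)
          rw [abs_le]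
          obtain ⟨hl, hr⟩ := hy i
          constructor
          · have h2 : m * y i < (s i : ℝ) + 1 / 2 ^ k := by
              have := mul_lt_mul_of_pos_left hr hmR
              calc (m : ℝ) * y i < m * ((s i : ℝ) / m + 1 / (2 ^ k * m)) := this
                _ = (s i : ℝ) + 1 / 2 ^ k := by field_simp
            linarith
          · have h3 : (s i : ℝ) ≤ m * y i := by
              have := mul_le_mul_of_nonneg_left hl (le_of_lt hmR)
              calc (s i : ℝ) = m * ((s i : ℝ) / m) := by field_simp
                _ ≤ m * y i := this
            have : (0 : ℝ) ≤ 1 / 2 ^ k := by positivity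
            linarith
      _ = (2 : ℝ) ^ (k - 1) * (1 / 2 ^ k) := by rw [← Finset.sum_mul, hchoose]
      _ < 1 := by
          have h2 : (0 : ℝ) < (2 : ℝ) ^ (k - 1) := by positivity
          have hk1 : (2 : ℝ) ^ k = 2 ^ (k - 1) * 2 := by
            rw [← pow_succ]; congr 1; omega
          rw [hk1, mul_one_div, div_lt_one (by positivity)]
          linarith
  have h2 : |T - (m : ℤ) * z| < 1 := by
    have : |((T - (m : ℤ) * z : ℤ) : ℝ)| < 1 := by push_cast; exact h1
    exact_mod_cast this
  have h3 : T = (m : ℤ) * z := by rw [abs_lt] at h2; omega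
  exact ⟨z, h3⟩
end
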